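/- arXiv:0807.5011 — 10 statements merged into one kernel-verified Lean document; each statement's English description precedes it below -/
import Mathlib

section
/- Let H be a finite-dimensional complex Hilbert space. Then the set P(H) of positive semidefinite operators on H is a maximal proper quadratic module in the *-algebra B(H) of linear operators on H with the adjoint involution. -/
def IsQuadraticModule {R : Type*} [Ring R] [StarRing R] (M : Set R) : Prop :=
  (∀ a ∈ M, star a = a) ∧ (1 : R) ∈ M ∧ (∀ a ∈ M, ∀ b ∈ M, a + b ∈ M) ∧
    ∀ r : R, ∀ a ∈ M, r * a * star r ∈ M

def IsProperQuadraticModule {R : Type*} [Ring R] [StarRing R] (M : Set R) : Prop :=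
  IsQuadraticModule M ∧ (-1 : R) ∉ M

def IsMaximalProperQuadraticModule {R : Type*} [Ring R] [StarRing R] (M : Set R) : Prop :=
  IsProperQuadraticModule M ∧
    ∀ M' : Set R, IsProperQuadraticModule M' → M ⊆ M' → M' = M
/-!
Conjugation `T ↦ r T r*` preserves positivity, and `-1` is not positive on a nonzero space, so
the positive operators form a proper quadratic module. For maximality, let a quadratic module `M`
contain a self-adjoint `T` that is not positive. Rescaling a vector with `re ⟪x, T x⟫ < 0` gives
`⟪x, T x⟫ = -1`; conjugating `T` by the rank-one operator `|u⟩⟨x|` then gives `-|u⟩⟨u|` for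
every `u`, and summing these over an orthonormal basis puts `-1` in `M`.
-/

open ContinuousLinearMap InnerProductSpace RCLike

namespace IsQuadraticModule

variable {R : Type*} [Ring R] [StarRing R] {M : Set R}

theorem zero_mem (hM : IsQuadraticModule M) : (0 : R) ∈ M := by
  simpa using hM.2.2.2 0 1 hM.2.1

theorem sum_mem (hM : IsQuadraticModule M) {ι : Type*} (s : Finset ι) {f : ι → R}
    (hf : ∀ i ∈ s, f i ∈ M) : ∑ i ∈ s, f i ∈ M :=
  Finset.sum_induction f (· ∈ M) (fun _ _ ha hb => hM.2.2.1 _ ha _ hb) hM.zero_mem hf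

end IsQuadraticModule

section

variable {𝕜 E : Type*} [RCLike 𝕜] [NormedAddCommGroup E] [InnerProductSpace 𝕜 E]

theorem not_isPositive_neg_one [Nontrivial E] : ¬ (-1 : E →L[𝕜] E).IsPositive := by
  intro h
  obtain ⟨x, hx⟩ := exists_ne (0 : E)
  simpa [hx] using h.re_inner_nonneg_left x

variable [CompleteSpace E]

theorem isQuadraticModule_setOf_isPositive :
    IsQuadraticModule {T : E →L[𝕜] E | T.IsPositive} :=
  ⟨fun _ hT => hT.isSelfAdjoint, isPositive_one, fun _ hS _ hT => hS.add hT,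
    fun r _ hT => by rw [star_eq_adjoint]; exact hT.conj_adjoint r⟩

theorem isProperQuadraticModule_setOf_isPositive [Nontrivial E] :
    IsProperQuadraticModule {T : E →L[𝕜] E | T.IsPositive} :=
  ⟨isQuadraticModule_setOf_isPositive, not_isPositive_neg_one⟩

theorem IsSelfAdjoint.exists_inner_self_apply_eq_neg_one {T : E →L[𝕜] E}
    (hT : IsSelfAdjoint T) (hpos : ¬ T.IsPositive) : ∃ x, ⟪x, T x⟫_𝕜 = -1 := by
  obtain ⟨x, hx⟩ : ∃ x, T.reApplyInnerSelf x < 0 := by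
    simpa [isPositive_def', hT] using hpos
  set s : ℝ := (√(-T.reApplyInnerSelf x))⁻¹
  refine ⟨(s : 𝕜) • x, ?_⟩
  rw [← hT.isSymmetric.apply_clm, ← hT.isSymmetric.coe_reApplyInnerSelf_apply,
    reApplyInnerSelf_smul]
  have hs : ‖(s : 𝕜)‖ ^ 2 * T.reApplyInnerSelf x = -1 := by
    rw [norm_ofReal, sq_abs, inv_pow, Real.sq_sqrt (by linarith), inv_mul_eq_div,
      div_neg, div_self hx.ne]
  rw [hs, ofReal_neg, ofReal_one]

theorem rankOne_mul_mul_star_rankOne (T : E →L[𝕜] E) (u x : E) :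
    rankOne 𝕜 u x * T * star (rankOne 𝕜 u x) = ⟪x, T x⟫_𝕜 • rankOne 𝕜 u u := by
  ext y
  simp [star_eq_adjoint, smul_smul, mul_comm]

theorem IsQuadraticModule.neg_one_mem_of_not_isPositive [FiniteDimensional 𝕜 E]
    {M : Set (E →L[𝕜] E)} (hM : IsQuadraticModule M) {T : E →L[𝕜] E} (hTM : T ∈ M)
    (hT : ¬ T.IsPositive) : -1 ∈ M := by
  obtain ⟨x, hx⟩ := IsSelfAdjoint.exists_inner_self_apply_eq_neg_one (hM.1 T hTM) hT
  have hrankOne (u : E) : -rankOne 𝕜 u u ∈ M := by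
    simpa [rankOne_mul_mul_star_rankOne, hx] using hM.2.2.2 (rankOne 𝕜 u x) T hTM
  rw [one_def, ← (stdOrthonormalBasis 𝕜 E).sum_rankOne_eq_id, ← Finset.sum_neg_distrib]
  exact hM.sum_mem _ fun i _ => hrankOne _

end

/-- On a (nonzero) finite-dimensional complex Hilbert space, the positive
semidefinite operators form a maximal proper quadratic module in `B(H)`. -/
theorem positive_operators_maximal {H : Type*} [NormedAddCommGroup H]
    [InnerProductSpace ℂ H] [FiniteDimensional ℂ H] [Nontrivial H] :
    IsMaximalProperQuadraticModule {T : H →L[ℂ] H | T.IsPositive} := by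
  refine ⟨isProperQuadraticModule_setOf_isPositive, fun M hM hPM => ?_⟩
  refine Set.Subset.antisymm (fun T hTM => ?_) hPM
  by_contra hT
  exact hM.2 (hM.1.neg_one_mem_of_not_isPositive hTM hT)
end

section
/- Let H be an infinite-dimensional complex Hilbert space, P(H) the set of positive semidefinite bounded operators on H, and K_s the set of self-adjoint compact operators on H. Then M = P(H) + K_s is a proper quadratic module in B(H) that strictly contains P(H); in particular P(H) is not a maximal proper quadratic module in B(H). -/
/-! If `-1 = p + k` with `p ≥ 0` and `k` compact, then `k ≤ -1`, so `‖x‖ ≤ ‖k x‖` for all `x`.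
A compact operator that is bounded below pulls a compact neighbourhood of `0` back to a compact
neighbourhood of `0`, which forces `H` to be finite-dimensional. Strictness is witnessed by
`-⟪x, ·⟫ • x`, which is compact and self-adjoint but not positive. -/

section

open ContinuousLinearMap InnerProductSpace RCLike
open scoped InnerProductSpace

theorem IsProperQuadraticModule.not_isMaximalProperQuadraticModule_of_ssubset
    {R : Type*} [Ring R] [StarRing R] {M M' : Set R} (hM' : IsProperQuadraticModule M')
    (hMM' : M ⊂ M') : ¬ IsMaximalProperQuadraticModule M :=
  fun hM ↦ hMM'.ne (hM.2 M' hM' hMM'.subset).symm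

theorem FiniteDimensional.of_isCompactOperator_of_antilipschitz {𝕜 E F : Type*}
    [NontriviallyNormedField 𝕜] [CompleteSpace 𝕜] [NormedAddCommGroup E] [NormedSpace 𝕜 E]
    [CompleteSpace E] [NormedAddCommGroup F] [NormedSpace 𝕜 F] {f : E →L[𝕜] F}
    (hf : IsCompactOperator f) {K : NNReal} (hK : AntilipschitzWith K f) :
    FiniteDimensional 𝕜 E := by
  obtain ⟨C, hC, hCf⟩ := hf
  exact .of_isCompactOperator_id
    ⟨f ⁻¹' C, (hK.isClosedEmbedding f.uniformContinuous).isCompact_preimage hC, hCf⟩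

variable {𝕜 E : Type*} [RCLike 𝕜] [NormedAddCommGroup E] [InnerProductSpace 𝕜 E]

theorem InnerProductSpace.isCompactOperator_rankOne {F : Type*} [NormedAddCommGroup F]
    [InnerProductSpace 𝕜 F] (x : E) (y : F) : IsCompactOperator (rankOne 𝕜 x y) :=
  (isCompactOperator_of_locallyCompactSpace_rng (toSpanSingleton 𝕜 x)).comp_clm (innerSL 𝕜 y)

theorem InnerProductSpace.not_isPositive_neg_rankOne_self {x : E} (hx : x ≠ 0) :
    ¬ (-rankOne 𝕜 x x).IsPositive := fun hneg ↦
  rankOne_ne_zero hx hx <| le_antisymm (by simpa [le_def] using hneg)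
    ((nonneg_iff_isPositive _).mpr (isPositive_rankOne_self x))

namespace ContinuousLinearMap

theorem antilipschitzWith_one_of_le_neg_one {k : E →L[𝕜] E} (hk : k ≤ -1) :
    AntilipschitzWith 1 k := by
  have hbound (x : E) : ‖x‖ ^ 2 * ((1 : NNReal) : ℝ) ≤ ‖⟪k x, x⟫_𝕜‖ := by
    have hpos := ((le_def _ _).mp hk).re_inner_nonneg_left x
    rw [sub_apply, neg_apply, one_apply_eq_self, inner_sub_left, inner_neg_left, map_sub, map_neg,
      inner_self_eq_norm_sq] at hpos
    calc ‖x‖ ^ 2 * ((1 : NNReal) : ℝ) ≤ -re ⟪k x, x⟫_𝕜 := by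
          simp only [NNReal.coe_one, mul_one]; linarith
      _ ≤ ‖⟪k x, x⟫_𝕜‖ := (neg_le_abs _).trans (abs_re_le_norm _)
  simpa using antilipschitz_of_forall_le_inner_map k one_pos hbound

end ContinuousLinearMap

variable (𝕜 E) [CompleteSpace E]

def positiveAddCompact : Set (E →L[𝕜] E) :=
  {T | ∃ p : E →L[𝕜] E, p.IsPositive ∧
    ∃ k : E →L[𝕜] E, IsSelfAdjoint k ∧ IsCompactOperator k ∧ T = p + k}

variable {𝕜 E}

theorem setOf_isPositive_subset_positiveAddCompact :
    {T : E →L[𝕜] E | T.IsPositive} ⊆ positiveAddCompact 𝕜 E :=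
  fun p hp ↦ ⟨p, hp, 0, .zero _, isCompactOperator_zero, (add_zero p).symm⟩

theorem neg_mem_positiveAddCompact {k : E →L[𝕜] E} (hk : IsSelfAdjoint k)
    (hkc : IsCompactOperator k) : -k ∈ positiveAddCompact 𝕜 E :=
  ⟨0, isPositive_zero, -k, hk.neg, hkc.neg, (zero_add _).symm⟩

theorem isQuadraticModule_positiveAddCompact : IsQuadraticModule (positiveAddCompact 𝕜 E) := by
  refine ⟨?_, setOf_isPositive_subset_positiveAddCompact isPositive_one, ?_, ?_⟩
  · rintro _ ⟨p, hp, k, hk, -, rfl⟩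
    exact (hp.isSelfAdjoint.add hk).star_eq
  · rintro _ ⟨p, hp, k, hk, hkc, rfl⟩ _ ⟨q, hq, l, hl, hlc, rfl⟩
    exact ⟨p + q, hp.add hq, k + l, hk.add hl, hkc.add hlc, add_add_add_comm _ _ _ _⟩
  · rintro r _ ⟨p, hp, k, hk, hkc, rfl⟩
    refine ⟨r * p * star r, hp.conj_adjoint r, r * k * star r, hk.conjugate r,
      (hkc.comp_clm (star r)).clm_comp r, by rw [mul_add, add_mul]⟩

theorem neg_one_notMem_positiveAddCompact (h : ¬ FiniteDimensional 𝕜 E) :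
    -1 ∉ positiveAddCompact 𝕜 E := by
  rintro ⟨p, hp, k, -, hkc, hpk⟩
  have hk : k ≤ -1 := by rwa [le_def, hpk, add_sub_cancel_right]
  exact h (.of_isCompactOperator_of_antilipschitz hkc (antilipschitzWith_one_of_le_neg_one hk))

theorem setOf_isPositive_ssubset_positiveAddCompact [Nontrivial E] :
    {T : E →L[𝕜] E | T.IsPositive} ⊂ positiveAddCompact 𝕜 E := by
  obtain ⟨x, hx⟩ := exists_ne (0 : E)
  refine ssubset_of_subset_not_subset setOf_isPositive_subset_positiveAddCompact fun hsub ↦ ?_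
  exact not_isPositive_neg_rankOne_self hx <| hsub <|
    neg_mem_positiveAddCompact (isPositive_rankOne_self x).isSelfAdjoint
      (isCompactOperator_rankOne x x)

end

/-- On an infinite-dimensional complex Hilbert space, `P(H) + K_s` is a proper
quadratic module strictly containing `P(H)`; in particular `P(H)` is not maximal. -/
theorem positive_plus_compact {H : Type*} [NormedAddCommGroup H]
    [InnerProductSpace ℂ H] [CompleteSpace H] (h : ¬ FiniteDimensional ℂ H) :
    IsProperQuadraticModule
        {T : H →L[ℂ] H | ∃ p : H →L[ℂ] H, p.IsPositive ∧
          ∃ k : H →L[ℂ] H, IsSelfAdjoint k ∧ IsCompactOperator k ∧ T = p + k} ∧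
      {T : H →L[ℂ] H | T.IsPositive} ⊂
        {T : H →L[ℂ] H | ∃ p : H →L[ℂ] H, p.IsPositive ∧
          ∃ k : H →L[ℂ] H, IsSelfAdjoint k ∧ IsCompactOperator k ∧ T = p + k} ∧
      ¬ IsMaximalProperQuadraticModule {T : H →L[ℂ] H | T.IsPositive} := by
  have : Nontrivial H := not_subsingleton_iff_nontrivial.mp fun _ ↦ h inferInstance
  have hM : IsProperQuadraticModule (positiveAddCompact ℂ H) :=
    ⟨isQuadraticModule_positiveAddCompact, neg_one_notMem_positiveAddCompact h⟩
  have hP := setOf_isPositive_ssubset_positiveAddCompact (𝕜 := ℂ) (E := H)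
  exact ⟨hM, hP, hM.not_isMaximalProperQuadraticModule_of_ssubset hP⟩
end

section
/- Let M be a proper quadratic module in a *-ring R and let J_M = {a ∈ R : a·u·u*·a* ∈ M⁰ for all u ∈ R}, where M⁰ = M ∩ (−M). Then J_M is a two-sided ideal of R. -/
/-- `J_M = {a : a u u* a* ∈ M⁰ for all u}` where `M⁰ = M ∩ (−M)`. -/
def qmIdeal {R : Type*} [Ring R] [StarRing R] (M : Set R) : Set R :=
  {a : R | ∀ u : R, a * (u * star u) * star a ∈ M ∩ (-M)}

theorem qmIdeal_isTwoSidedIdeal {R : Type*} [Ring R] [StarRing R]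
    {M : Set R} (hM : IsProperQuadraticModule M) :
    (0 : R) ∈ qmIdeal M ∧
      (∀ a ∈ qmIdeal M, ∀ b ∈ qmIdeal M, a + b ∈ qmIdeal M) ∧
      (∀ a ∈ qmIdeal M, -a ∈ qmIdeal M) ∧
      (∀ a ∈ qmIdeal M, ∀ r : R, r * a ∈ qmIdeal M ∧ a * r ∈ qmIdeal M) := by
  obtain ⟨⟨hsym, h1, hadd, hconj⟩, hproper⟩ := hM
  have hsq : ∀ r : R, r * star r ∈ M := fun r => by simpa using hconj r 1 h1
  have h0 : (0 : R) ∈ M := by simpa using hconj 0 1 h1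
  refine ⟨?_, ?_, ?_, ?_⟩
  · intro u
    constructor
    · simpa using h0
    · rw [Set.mem_neg]; simpa using h0
  · intro a ha b hb u
    have hX : (a + b) * (u * star u) * star (a + b) ∈ M := by
      have := hsq ((a + b) * u)
      simpa [star_mul, mul_assoc] using this
    have hY : (a - b) * (u * star u) * star (a - b) ∈ M := by
      have := hsq ((a - b) * u)
      simpa [star_mul, mul_assoc] using this
    have hma : -(a * (u * star u) * star a) ∈ M := by
      have := (ha u).2; rwa [Set.mem_neg] at this
    have hmb : -(b * (u * star u) * star b) ∈ M := by
      have := (hb u).2; rwa [Set.mem_neg] at this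
    refine ⟨hX, ?_⟩
    rw [Set.mem_neg]
    have key : -((a + b) * (u * star u) * star (a + b)) =
        (a - b) * (u * star u) * star (a - b) +
          (-(a * (u * star u) * star a) + -(a * (u * star u) * star a)) +
          (-(b * (u * star u) * star b) + -(b * (u * star u) * star b)) := by
      simp only [star_add, star_sub]
      noncomm_ring
    rw [key]
    exact hadd _ (hadd _ hY _ (hadd _ hma _ hma)) _ (hadd _ hmb _ hmb)
  · intro a ha u
    have : (-a) * (u * star u) * star (-a) = a * (u * star u) * star a := by
      simp only [star_neg]; noncomm_ring
    rw [Set.mem_inter_iff, this]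
    exact ha u
  · intro a ha r
    constructor
    · intro u
      have h := ha u
      have e : (r * a) * (u * star u) * star (r * a) =
          r * (a * (u * star u) * star a) * star r := by
        simp only [star_mul]; noncomm_ring
      rw [Set.mem_inter_iff, e]
      refine ⟨hconj r _ h.1, ?_⟩
      rw [Set.mem_neg]
      have hm : -(a * (u * star u) * star a) ∈ M := by
        have := h.2; rwa [Set.mem_neg] at this
      have := hconj r _ hm
      have e2 : r * -(a * (u * star u) * star a) * star r =
          -(r * (a * (u * star u) * star a) * star r) := by noncomm_ring
      rwa [e2] at this
    · intro u
      have h := ha (r * u)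
      have e : a * r * (u * star u) * star (a * r) =
          a * ((r * u) * star (r * u)) * star a := by
        simp only [star_mul]; noncomm_ring
      rw [Set.mem_inter_iff, e]
      exact h
end

section
/- Let M be a proper quadratic module in a *-ring R with support M⁰ = M ∩ (−M). Then M⁰ ⊆ J_M, i.e., for every a ∈ M⁰ and every u ∈ R, one has a·u·u*·a ∈ M⁰. -/
/-- The support `M⁰ = M ∩ (−M)` of a proper quadratic module is contained in
`J_M`: for every `a ∈ M⁰` and `u ∈ R`, `a·u·u*·a ∈ M⁰`. -/
theorem support_subset_qmIdeal {R : Type*} [Ring R] [StarRing R]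
    {M : Set R} (hM : IsProperQuadraticModule M) :
    ∀ a ∈ M ∩ (-M), ∀ u : R, a * (u * star u) * a ∈ M ∩ (-M) := by
  obtain ⟨⟨hsym, h1, hadd, hmul⟩, -⟩ := hM
  rintro a ⟨haM, haN⟩ u
  have hna : -a ∈ M := by simpa [Set.mem_neg] using haN
  have hsa : star a = a := hsym a haM
  set z : R := u * star u with hz
  have hsz : star z = z := by simp [hz, mul_assoc]
  -- a z a = (a u) ⬝ 1 ⬝ (a u)* ∈ M
  have key1 : a * z * a ∈ M := by
    have := hmul (a * u) 1 h1
    simpa [hz, mul_assoc, hsa, mul_comm] using this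
  have key2 : (1 + a * z) * (-a) * star (1 + a * z) ∈ M := hmul _ _ hna
  have key3 : (1 - a * z) * a * star (1 - a * z) ∈ M := hmul _ _ haM
  have hst1 : star (1 + a * z) = 1 + z * a := by
    simp [star_add, star_mul, hsa, hsz]
  have hst2 : star (1 - a * z) = 1 - z * a := by
    simp [star_sub, star_mul, hsa, hsz]
  rw [hst1] at key2
  rw [hst2] at key3
  have hsum : (1 + a * z) * (-a) * (1 + z * a) + (1 - a * z) * a * (1 - z * a)
      + (a * z * a + (a * z * a + a * z * a)) ∈ M :=
    hadd _ (hadd _ key2 _ key3) _ (hadd _ key1 _ (hadd _ key1 _ key1))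
  have heq : (1 + a * z) * (-a) * (1 + z * a) + (1 - a * z) * a * (1 - z * a)
      + (a * z * a + (a * z * a + a * z * a)) = -(a * z * a) := by
    noncomm_ring
  rw [heq] at hsum
  exact ⟨key1, by simpa [Set.mem_neg] using hsum⟩
end

section
/- Let M be a maximal proper quadratic module in a *-ring R. Then J_M ∩ Sym(R) = M⁰, where M⁰ = M ∩ (−M) is the support of M and J_M = {a ∈ R : a·u·u*·a* ∈ M⁰ for all u ∈ R}. -/
section Aux

variable {R : Type*} [Ring R] [StarRing R] {M : Set R}

lemma qm_zero (h : IsQuadraticModule M) : (0 : R) ∈ M := by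
  have := h.2.2.2 0 1 h.2.1
  simpa using this

lemma qm_sq (h : IsQuadraticModule M) (s : R) : s * star s ∈ M := by
  have := h.2.2.2 s 1 h.2.1
  simpa using this

/-- If `a, -a ∈ M` then `-(v*a + a*v*) ∈ M`. -/
lemma qm_neg_L (h : IsQuadraticModule M) {a : R} (ha : a ∈ M) (hna : -a ∈ M) (v : R) :
    -(v * a + a * star v) ∈ M := by
  have h1 := h.2.2.2 (1 + v) (-a) hna
  rw [star_add, star_one] at h1
  have h2 := h.2.2.2 v a ha
  have key := h.2.2.1 _ (h.2.2.1 _ h1 _ ha) _ h2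
  have e : (1 + v) * -a * (1 + star v) + a + v * a * star v = -(v * a + a * star v) := by
    noncomm_ring
  rwa [e] at key

/-- The heavy direction: a symmetric element of `qmIdeal M` lies in `M` (for maximal `M`). -/
lemma mem_of_qmIdeal (hM : IsMaximalProperQuadraticModule M) {a : R}
    (ha : a ∈ qmIdeal M) (hsa : star a = a) : a ∈ M := by
  obtain ⟨⟨hq, hproper⟩, hmax⟩ := hM
  obtain ⟨hsym, hone, hadd, hconj⟩ := hq
  have hq' : IsQuadraticModule M := ⟨hsym, hone, hadd, hconj⟩
  -- Fact A : conjugates of `a·qq*·a` are in M and -M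
  have hA : ∀ z q : R, z * (a * (q * star q) * a) * star z ∈ M ∧
      -(z * (a * (q * star q) * a) * star z) ∈ M := by
    intro z q
    have h0 := ha q
    rw [hsa] at h0
    refine ⟨hconj z _ h0.1, ?_⟩
    have h1 : -(a * (q * star q) * a) ∈ M := Set.mem_neg.mp h0.2
    have := hconj z _ h1
    have e : z * -(a * (q * star q) * a) * star z = -(z * (a * (q * star q) * a) * star z) := by
      noncomm_ring
    rwa [e] at this
  -- Fact C : polarization in the outer variable
  have hC : ∀ z₁ z₂ q : R, (z₁ * (a * (q * star q) * a) * star z₂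
        + z₂ * (a * (q * star q) * a) * star z₁ ∈ M) ∧
      (-(z₁ * (a * (q * star q) * a) * star z₂
        + z₂ * (a * (q * star q) * a) * star z₁) ∈ M) := by
    intro z₁ z₂ q
    have h12 := hA (z₁ + z₂) q
    have h1 := hA z₁ q
    have h2 := hA z₂ q
    rw [star_add] at h12
    constructor
    · have key := hadd _ (hadd _ h12.1 _ h1.2) _ h2.2
      have e : (z₁ + z₂) * (a * (q * star q) * a) * (star z₁ + star z₂)
          + -(z₁ * (a * (q * star q) * a) * star z₁)
          + -(z₂ * (a * (q * star q) * a) * star z₂)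
          = z₁ * (a * (q * star q) * a) * star z₂
            + z₂ * (a * (q * star q) * a) * star z₁ := by noncomm_ring
      rwa [e] at key
    · have key := hadd _ (hadd _ h12.2 _ h1.1) _ h2.1
      have e : -((z₁ + z₂) * (a * (q * star q) * a) * (star z₁ + star z₂))
          + z₁ * (a * (q * star q) * a) * star z₁
          + z₂ * (a * (q * star q) * a) * star z₂
          = -(z₁ * (a * (q * star q) * a) * star z₂
            + z₂ * (a * (q * star q) * a) * star z₁) := by noncomm_ring
      rwa [e] at key
  set F : R → R := fun s => s * a * star s with hF
  -- hU : (s a t*)² + (t a s*)² ∈ M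
  have hU : ∀ s t : R, (s * a * star t) * (s * a * star t)
      + (t * a * star s) * (t * a * star s) ∈ M := by
    intro s t
    have hgh : star (s * a * star t + t * a * star s) = s * a * star t + t * a * star s := by
      simp only [star_add, star_mul, star_star, hsa]
      rw [add_comm]
      noncomm_ring
    have hsq := qm_sq hq' (s * a * star t + t * a * star s)
    rw [hgh] at hsq
    have h1 := (hA s (star t)).2
    have h2 := (hA t (star s)).2
    rw [star_star] at h1 h2
    have key := hadd _ (hadd _ hsq _ h1) _ h2
    have e : (s * a * star t + t * a * star s) * (s * a * star t + t * a * star s)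
        + -(s * (a * (star t * t) * a) * star s)
        + -(t * (a * (star s * s) * a) * star t)
        = (s * a * star t) * (s * a * star t) + (t * a * star s) * (t * a * star s) := by
      noncomm_ring
    rwa [e] at key
  -- hD : -(F s * F t + F t * F s) ∈ M
  have hD : ∀ s t : R, -(F s * F t + F t * F s) ∈ M := by
    intro s t
    have h1 := (hC s t (star s + star t)).2
    rw [star_add, star_star, star_star] at h1
    have h2 := (hC s t (star s)).1
    rw [star_star] at h2
    have h3 := (hC s t (star t)).1
    rw [star_star] at h3
    have key := hadd _ (hadd _ (hadd _ h1 _ h2) _ h3) _ (hU s t)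
    have e : -(s * (a * ((star s + star t) * (s + t)) * a) * star t
          + t * (a * ((star s + star t) * (s + t)) * a) * star s)
        + (s * (a * (star s * s) * a) * star t + t * (a * (star s * s) * a) * star s)
        + (s * (a * (star t * t) * a) * star t + t * (a * (star t * t) * a) * star s)
        + ((s * a * star t) * (s * a * star t) + (t * a * star s) * (t * a * star s))
        = -(F s * F t + F t * F s) := by
      simp only [hF]
      noncomm_ring
    rwa [e] at key
  -- hFsq : -(F s * F s) ∈ M
  have hFsq : ∀ s : R, -(F s * F s) ∈ M := by
    intro s
    have h1 := (hA s (star s)).2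
    rw [star_star] at h1
    have e : -(s * (a * (star s * s) * a) * star s) = -(F s * F s) := by
      simp only [hF]; noncomm_ring
    rwa [e] at h1
  set w : List R → R := fun l => (l.map F).sum with hw
  have hwnil : w [] = 0 := by simp [hw]
  have hwcons : ∀ t l, w (t :: l) = F t + w l := by
    intro t l; simp [hw]
  -- cross terms with a whole sum
  have hcrossW : ∀ s l, -(F s * w l + w l * F s) ∈ M := by
    intro s l
    induction l with
    | nil => rw [hwnil]; simpa using qm_zero hq'
    | cons t l ih =>
      rw [hwcons]
      have key := hadd _ (hD s t) _ ih
      have e : -(F s * F t + F t * F s) + -(F s * w l + w l * F s)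
          = -(F s * (F t + w l) + (F t + w l) * F s) := by noncomm_ring
      rwa [e] at key
  have hnegsq : ∀ l, -(w l * w l) ∈ M := by
    intro l
    induction l with
    | nil => rw [hwnil]; simpa using qm_zero hq'
    | cons t l ih =>
      rw [hwcons]
      have key := hadd _ (hadd _ (hFsq t) _ (hcrossW t l)) _ ih
      have e : -(F t * F t) + -(F t * w l + w l * F t) + -(w l * w l)
          = -((F t + w l) * (F t + w l)) := by noncomm_ring
      rwa [e] at key
  have hwsym : ∀ l, star (w l) = w l := by
    intro l
    induction l with
    | nil => simp [hwnil]
    | cons t l ih =>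
      rw [hwcons, star_add, ih]
      congr 1
      simp only [hF, star_mul, star_star, hsa]
      noncomm_ring
  have hconjW : ∀ r l, r * w l * star r = w (l.map (fun s => r * s)) := by
    intro r l
    induction l with
    | nil => simp [hwnil]
    | cons t l ih =>
      rw [hwcons, List.map_cons, hwcons, ← ih]
      simp only [hF, star_mul]
      noncomm_ring
  -- the quadratic module generated by M and a
  set M' : Set R := {x | ∃ m ∈ M, ∃ l : List R, x = m + w l} with hM'
  have hMsub : M ⊆ M' := fun x hx => ⟨x, hx, [], by rw [hwnil, add_zero]⟩
  have haM' : a ∈ M' := ⟨0, qm_zero hq', [1], by simp [hwcons, hwnil, hF]⟩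
  have hM'qm : IsQuadraticModule M' := by
    refine ⟨?_, hMsub hone, ?_, ?_⟩
    · rintro x ⟨m, hm, l, rfl⟩
      rw [star_add, hsym m hm, hwsym]
    · rintro x ⟨m, hm, l, rfl⟩ y ⟨m', hm', l', rfl⟩
      refine ⟨m + m', hadd _ hm _ hm', l ++ l', ?_⟩
      have : w (l ++ l') = w l + w l' := by simp [hw]
      rw [this]; abel
    · rintro r x ⟨m, hm, l, rfl⟩
      refine ⟨r * m * star r, hconj r m hm, l.map (fun s => r * s), ?_⟩
      rw [← hconjW]
      noncomm_ring
  have hM'proper : (-1 : R) ∉ M' := by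
    rintro ⟨m, hm, l, heq⟩
    have hwl : w l = -1 - m := by rw [heq]; abel
    have hm2 : m * m ∈ M := by
      have := hconj m 1 hone
      rw [mul_one, hsym m hm] at this
      exact this
    have key := hadd _ (hadd _ (hadd _ (hnegsq l) _ hm) _ hm) _ hm2
    have e : -(w l * w l) + m + m + m * m = -1 := by
      rw [hwl]; noncomm_ring
    rw [e] at key
    exact hproper key
  have hM'eq : M' = M := hmax M' ⟨hM'qm, hM'proper⟩ hMsub
  rw [← hM'eq]
  exact haM'

end Aux

theorem qmIdeal_inter_symmetric_eq_support {R : Type*} [Ring R] [StarRing R]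
    {M : Set R} (hM : IsMaximalProperQuadraticModule M) :
    qmIdeal M ∩ {r : R | star r = r} = M ∩ (-M) := by
  obtain ⟨⟨hq, hproper⟩, hmax⟩ := hM
  obtain ⟨hsym, hone, hadd, hconj⟩ := hq
  have hq' : IsQuadraticModule M := ⟨hsym, hone, hadd, hconj⟩
  have hM' : IsMaximalProperQuadraticModule M := ⟨⟨hq', hproper⟩, hmax⟩
  ext x
  constructor
  · rintro ⟨hx1, hx2⟩
    have hx2' : star x = x := hx2
    refine ⟨mem_of_qmIdeal hM' hx1 hx2', ?_⟩
    rw [Set.mem_neg]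
    refine mem_of_qmIdeal hM' ?_ (by rw [star_neg, hx2'])
    intro u
    have e : -x * (u * star u) * star (-x) = x * (u * star u) * star x := by
      rw [star_neg]; noncomm_ring
    rw [e]
    exact hx1 u
  · rintro ⟨hxM, hxnM⟩
    have hnx : -x ∈ M := Set.mem_neg.mp hxnM
    have hsx : star x = x := hsym x hxM
    refine ⟨?_, hsx⟩
    intro u
    have h1 : x * (u * star u) * star x ∈ M := by
      have := hconj (x * u) 1 hone
      rw [mul_one, star_mul, hsx] at this
      have e : x * u * (star u * x) = x * (u * star u) * star x := by
        rw [hsx]; noncomm_ring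
      rwa [e] at this
    refine ⟨h1, ?_⟩
    rw [Set.mem_neg]
    have hL := qm_neg_L hq' hxM hnx (x * (u * star u))
    have key := hadd _ h1 _ hL
    have e : x * (u * star u) * star x
        + -(x * (u * star u) * x + x * star (x * (u * star u)))
        = -(x * (u * star u) * star x) := by
      rw [star_mul, star_mul, star_star, hsx]
      noncomm_ring
    rwa [e] at key
end

section
/- Let M be a maximal proper quadratic module in a *-ring R. Then the two-sided ideal J_M = {a ∈ R : a·u·u*·a* ∈ M ∩ (−M) for all u ∈ R} is a prime ideal of R, i.e., whenever a, b ∈ R satisfy a·r·b ∈ J_M for all r ∈ R, then a ∈ J_M or b ∈ J_M. -/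
theorem qmIdeal_isPrime {R : Type*} [Ring R] [StarRing R]
    {M : Set R} (hM : IsMaximalProperQuadraticModule M) :
    ∀ a b : R, (∀ r : R, a * r * b ∈ qmIdeal M) → a ∈ qmIdeal M ∨ b ∈ qmIdeal M := by
  obtain ⟨⟨⟨hstar, hone, hadd, hconj⟩, hproper⟩, hmax⟩ := hM
  have hzero : (0 : R) ∈ M := by simpa using hconj 0 1 hone
  intro a b hab
  by_cases hb : b ∈ qmIdeal M
  · exact Or.inr hb
  left
  simp only [qmIdeal, Set.mem_setOf_eq, Set.mem_inter_iff, not_forall] at hb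
  obtain ⟨v, hv⟩ := hb
  set t : R := b * (v * star v) * star b with ht
  have htM : ∀ c w : R, c * (w * star w) * star c ∈ M := by
    intro c w
    have := hconj (c * w) 1 hone
    simpa [mul_assoc, star_mul] using this
  have hvM : -t ∉ M := by
    intro h
    exact hv ⟨htM b v, by simpa [Set.mem_neg] using h⟩
  set S : Set R := {x | ∃ r : R, x = r * (-t) * star r} with hS
  set N := AddSubmonoid.closure (M ∪ S) with hN
  have hMN : M ⊆ (N : Set R) := fun m hm => AddSubmonoid.subset_closure (Or.inl hm)
  have hSN : S ⊆ (N : Set R) := fun s hs => AddSubmonoid.subset_closure (Or.inr hs)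
  have htstar : star t = t := by simp [ht, star_mul, mul_assoc]
  -- N is closed under conjugation
  have hNconj : ∀ c : R, ∀ x ∈ N, c * x * star c ∈ N := by
    intro c x hx
    have hle : N ≤ N.comap ((AddMonoidHom.mulRight (star c)).comp (AddMonoidHom.mulLeft c)) := by
      rw [hN, AddSubmonoid.closure_le]
      rintro y (hy | ⟨r, rfl⟩)
      · exact hMN (hconj c y hy)
      · refine hSN ⟨c * r, ?_⟩
        simp [mul_assoc, star_mul, mul_neg, neg_mul]
    exact hle hx
  -- elements of N are hermitian
  have hNstar : ∀ x ∈ N, star x = x := by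
    intro x hx
    have hle : N ≤ (selfAdjoint R).toAddSubmonoid := by
      rw [hN, AddSubmonoid.closure_le]
      rintro y (hy | ⟨r, rfl⟩)
      · exact hstar y hy
      · show star _ = _
        simp [star_mul, mul_neg, neg_mul, htstar, mul_assoc]
    exact hle hx
  -- -1 ∈ N by maximality
  have hneg1 : (-1 : R) ∈ N := by
    by_contra hn
    have hprop : IsProperQuadraticModule (N : Set R) :=
      ⟨⟨hNstar, hMN hone, fun p hp q hq => N.add_mem hp hq, fun r p hp => hNconj r p hp⟩, hn⟩
    have heq := hmax _ hprop hMN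
    apply hvM
    rw [← heq]
    exact hSN ⟨1, by simp⟩
  -- split -1 = m + s
  set Msub : AddSubmonoid R :=
    { carrier := M
      add_mem' := fun ha hb => hadd _ ha _ hb
      zero_mem' := hzero } with hMsub
  have hNeq : N = Msub ⊔ AddSubmonoid.closure S := by
    rw [hN, AddSubmonoid.closure_union]
    congr 1
    exact AddSubmonoid.closure_eq Msub
  rw [hNeq, AddSubmonoid.mem_sup] at hneg1
  obtain ⟨m, hm, s, hs, hsum⟩ := hneg1
  have hmM : m ∈ M := hm
  -- key: conjugates of closure S by a*u land in M
  have key : ∀ u : R, (a * u) * s * star (a * u) ∈ M := by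
    intro u
    have hle : AddSubmonoid.closure S ≤
        { carrier := {y : R | (a * u) * y * star (a * u) ∈ M}
          zero_mem' := by simpa using hzero
          add_mem' := fun {p q} hp hq => by
            simpa [mul_add, add_mul] using hadd _ hp _ hq } := by
      rw [AddSubmonoid.closure_le]
      rintro y ⟨r, rfl⟩
      show (a * u) * (r * (-t) * star r) * star (a * u) ∈ M
      have h1 : -((a * (u * r) * b) * (v * star v) * star (a * (u * r) * b)) ∈ M :=
        Set.mem_neg.mp (hab (u * r) v).2
      have heq : (a * u) * (r * (-t) * star r) * star (a * u)
          = -((a * (u * r) * b) * (v * star v) * star (a * (u * r) * b)) := by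
        simp [ht, star_mul, mul_assoc, mul_neg, neg_mul]
      rw [heq]; exact h1
    exact hle hs
  intro u
  refine ⟨htM a u, ?_⟩
  rw [Set.mem_neg]
  have h1 := key u
  have h2 := hconj (a * u) m hmM
  have h3 := hadd _ h1 _ h2
  have heq : (a * u) * s * star (a * u) + (a * u) * m * star (a * u)
      = -(a * (u * star u) * star a) := by
    have hsm : s + m = -1 := by rw [add_comm]; exact hsum
    rw [← add_mul, ← mul_add, hsm]
    simp [star_mul, mul_assoc]
  rwa [heq] at h3
end

section
/- Let A be a *-ring, M a proper quadratic module in A, and N a *-invariant reversible Ore set in A with N ∩ M⁰ = ∅, where M⁰ = M ∩ (−M). Let Q = A·N⁻¹ be the Ore localization (with the unique extension of the involution). Then the set M̃ = {q ∈ Sym(Q) : n·q·n* ∈ M for some n ∈ N} is a proper quadratic module in Q. -/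
/-- Localization of a proper quadratic module at a `*`-invariant reversible
Ore set.  The Ore localization `Q = A N⁻¹` is modelled by a `*`-ring `Q`
together with an injective `*`-homomorphism `f : A → Q` mapping `N` to units
such that every element of `Q` is a right fraction `f a · (f n)⁻¹` and a left
fraction `(f n)⁻¹ · f a`. -/
theorem quadraticModule_localization {A Q : Type*} [Ring A] [StarRing A]
    [Ring Q] [StarRing Q] (f : A →+* Q) (hfstar : ∀ a : A, f (star a) = star (f a))
    (hfinj : Function.Injective f) (N : Submonoid A)
    (hNstar : ∀ n ∈ N, star n ∈ N) (hNunit : ∀ n ∈ N, IsUnit (f n))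
    (hright : ∀ q : Q, ∃ n ∈ N, ∃ a : A, q * f n = f a)
    (hleft : ∀ q : Q, ∃ n ∈ N, ∃ a : A, f n * q = f a)
    (M : Set A) (hM : IsProperQuadraticModule M)
    (hdisj : ∀ n ∈ N, n ∉ M ∩ (-M)) :
    IsProperQuadraticModule
      {q : Q | star q = q ∧ ∃ n ∈ N, f n * q * star (f n) ∈ f '' M} := by
  obtain ⟨⟨hsym, h1, hadd, hconj⟩, hproper⟩ := hM
  -- closure under conjugation
  have key : ∀ r : Q, ∀ q : Q, star q = q →
      (∃ n ∈ N, f n * q * star (f n) ∈ f '' M) →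
      star (r * q * star r) = r * q * star r ∧
        ∃ n ∈ N, f n * (r * q * star r) * star (f n) ∈ f '' M := by
    rintro r q hq ⟨n, hn, p, hp, hpq⟩
    obtain ⟨u, hu⟩ := hNunit n hn
    obtain ⟨m, hm, c, hc⟩ := hleft (r * ↑u⁻¹)
    have hmr : f m * r = f c * f n := by
      have : f m * (r * ↑u⁻¹) * ↑u = f c * f n := by rw [hc, hu]
      rwa [mul_assoc, Units.inv_mul_cancel_right] at this
    refine ⟨by simp [star_mul, hq, mul_assoc], m, hm,
      c * p * star c, hconj c p hp, ?_⟩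
    have : f m * (r * q * star r) * star (f m)
        = f c * (f n * q * star (f n)) * star (f c) := by
      have h2 : star (f m * r) = star (f c * f n) := by rw [hmr]
      simp only [star_mul] at h2
      calc f m * (r * q * star r) * star (f m)
          = (f m * r) * q * (star r * star (f m)) := by
            simp only [mul_assoc]
        _ = (f c * f n) * q * (star (f n) * star (f c)) := by rw [hmr, h2]
        _ = f c * (f n * q * star (f n)) * star (f c) := by
            simp only [mul_assoc]
    rw [this, ← hpq, map_mul, map_mul, hfstar]
  refine ⟨⟨fun a ha => ha.1, ⟨by simp, 1, N.one_mem, 1, h1, by simp⟩,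
      ?_, fun r a ha => key r a ha.1 ha.2⟩, ?_⟩
  · -- addition
    rintro q₁ ⟨hq₁, n₁, hn₁, p₁, hp₁, he₁⟩ q₂ hq₂
    obtain ⟨-, m, hm, p₂, hp₂, he₂⟩ := key (f n₁) q₂ hq₂.1 hq₂.2
    rw [← hfstar] at he₂
    refine ⟨by rw [star_add, hq₁, hq₂.1], m * n₁, N.mul_mem hm hn₁,
      m * p₁ * star m + p₂, hadd _ (hconj m p₁ hp₁) _ hp₂, ?_⟩
    calc f (m * p₁ * star m + p₂)
        = f m * f p₁ * star (f m) + f p₂ := by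
          rw [map_add, map_mul, map_mul, hfstar]
      _ = f m * (f n₁ * q₁ * star (f n₁)) * star (f m)
            + f m * (f n₁ * q₂ * f (star n₁)) * star (f m) := by rw [he₁, he₂]
      _ = f (m * n₁) * (q₁ + q₂) * star (f (m * n₁)) := by
          rw [map_mul]
          simp only [star_mul, hfstar, mul_add, add_mul, mul_assoc]
  · -- properness
    rintro ⟨-, n, hn, p, hp, he⟩
    have key2 : f n * (-1 : Q) * star (f n) = f (-(n * star n)) := by
      rw [map_neg, map_mul, hfstar, mul_neg_one, neg_mul]
    rw [key2] at he
    have hpe : p = -(n * star n) := hfinj he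
    refine hdisj (n * star n) (N.mul_mem hn (hNstar n hn)) ⟨?_, ?_⟩
    · have := hconj n 1 h1
      simpa using this
    · rw [Set.mem_neg, ← hpe]; exact hp
end

section
/- Let A be a *-ring, N a *-invariant reversible Ore set with localization Q = AN⁻¹, and for a quadratic module M in A with M⁰ ∩ N = ∅ define its N-closure M̄ = {a ∈ Sym(A) : n·a·n* ∈ M for some n ∈ N}. Then the maps M ↦ M̃ = {q ∈ Sym(Q) : n q n* ∈ M for some n ∈ N} and M' ↦ M' ∩ Sym(A) are mutually inverse bijections between proper N-closed quadratic modules of A and proper quadratic modules of Q. -/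
/-- A quadratic module `M` of `A` is `N`-closed if its support avoids `N` and
`M` coincides with its `N`-closure `{a ∈ Sym(A) : n a n* ∈ M for some n ∈ N}`. -/
def IsNClosed {A : Type*} [Ring A] [StarRing A] (N : Submonoid A) (M : Set A) : Prop :=
  (∀ n ∈ N, n ∉ M ∩ (-M)) ∧
    M = {a : A | star a = a ∧ ∃ n ∈ N, n * a * star n ∈ M}

/-- If a quadratic module contains both `u` and `-u` for a hermitian unit `u`,
then it contains `-1`. -/
lemma neg_one_mem_of_isUnit {Q : Type*} [Ring Q] [StarRing Q] {M : Set Q}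
    (hM : IsQuadraticModule M) {u : Q} (hu : IsUnit u) (hus : star u = u)
    (h1 : u ∈ M) (h2 : -u ∈ M) : (-1 : Q) ∈ M := by
  obtain ⟨w, rfl⟩ := hu
  set v : Q := ((w⁻¹ : Qˣ) : Q) with hv
  have hvu : v * (w : Q) = 1 := w.inv_mul
  have huv : (w : Q) * v = 1 := w.mul_inv
  have hvs : star v = v := by
    have h := congrArg star huv
    rw [star_mul, star_one, hus] at h
    calc star v = star v * ((w : Q) * v) := by rw [huv, mul_one]
      _ = star v * (w : Q) * v := by rw [mul_assoc]
      _ = v := by rw [h, one_mul]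
  obtain ⟨-, hone, hadd, hconj⟩ := hM
  have m3 : v * (w : Q) * star v ∈ M := hconj v _ h1
  have m4 : (1 + v) * (-(w : Q)) * star (1 + v) ∈ M := hconj (1 + v) _ h2
  have hsum : (1 : Q) + (w : Q) + (v * (w : Q) * star v)
      + ((1 + v) * (-(w : Q)) * star (1 + v)) ∈ M :=
    hadd _ (hadd _ (hadd _ hone _ h1) _ m3) _ m4
  have key : (1 : Q) + (w : Q) + (v * (w : Q) * star v)
      + ((1 + v) * (-(w : Q)) * star (1 + v)) = -1 := by
    simp only [star_add, star_one, hvs]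
    have expand : (1 : Q) + (w : Q) + (v * (w : Q) * v) + ((1 + v) * (-(w : Q)) * (1 + v))
        = 1 - (w : Q) * v - v * (w : Q) - v * ((w : Q) * v) + v * ((w : Q) * v) := by
      noncomm_ring
    rw [expand, huv, hvu]
    norm_num
  rwa [key] at hsum

/-- If `u q u* ∈ M` for a unit `u` and quadratic module `M`, then `q ∈ M`. -/
lemma mem_of_conj_isUnit {Q : Type*} [Ring Q] [StarRing Q] {M : Set Q}
    (hM : IsQuadraticModule M) {u q : Q} (hu : IsUnit u)
    (h : u * q * star u ∈ M) : q ∈ M := by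
  obtain ⟨w, rfl⟩ := hu
  have h2 : star (w : Q) * star ((w⁻¹ : Qˣ) : Q) = 1 := by
    rw [← star_mul, Units.inv_mul, star_one]
  have e : ((w⁻¹ : Qˣ) : Q) * ((w : Q) * q * star (w : Q)) * star ((w⁻¹ : Qˣ) : Q) = q := by
    calc ((w⁻¹ : Qˣ) : Q) * ((w : Q) * q * star (w : Q)) * star ((w⁻¹ : Qˣ) : Q)
        = (((w⁻¹ : Qˣ) : Q) * (w : Q)) * q * (star (w : Q) * star ((w⁻¹ : Qˣ) : Q)) := by
          noncomm_ring
      _ = q := by rw [w.inv_mul, h2, one_mul, mul_one]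
  have hc := hM.2.2.2 ((w⁻¹ : Qˣ) : Q) _ h
  rwa [e] at hc

/-- Common left denominator: any `r : Q` can be written so that `f n * r = f b * f n₁`. -/
lemma exists_left_common {A Q : Type*} [Ring A] [Ring Q] (f : A →+* Q) (N : Submonoid A)
    (hNunit : ∀ n ∈ N, IsUnit (f n)) (hleft : ∀ q : Q, ∃ n ∈ N, ∃ a : A, f n * q = f a)
    (r : Q) {n₁ : A} (hn₁ : n₁ ∈ N) : ∃ n ∈ N, ∃ b : A, f n * r = f b * f n₁ := by
  set u₁ := (hNunit n₁ hn₁).unit with hu₁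
  obtain ⟨n, hn, b, hb⟩ := hleft (r * ((u₁⁻¹ : Qˣ) : Q))
  refine ⟨n, hn, b, ?_⟩
  have hu : (u₁ : Q) = f n₁ := (hNunit n₁ hn₁).unit_spec
  calc f n * r = f n * (r * ((u₁⁻¹ : Qˣ) : Q)) * (u₁ : Q) := by
        rw [mul_assoc (f n), mul_assoc r, Units.inv_mul, mul_one]
    _ = f b * f n₁ := by rw [hb, hu]

lemma conj_push {A Q : Type*} [Ring A] [StarRing A] [Ring Q] [StarRing Q]
    (f : A →+* Q) (hfstar : ∀ a : A, f (star a) = star (f a))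
    {q : Q} {n₁ a₁ b : A} (he : f n₁ * q * star (f n₁) = f a₁) :
    (f b * f n₁) * q * star (f b * f n₁) = f (b * a₁ * star b) := by
  calc (f b * f n₁) * q * star (f b * f n₁)
      = f b * (f n₁ * q * star (f n₁)) * star (f b) := by rw [star_mul]; noncomm_ring
    _ = f b * f a₁ * star (f b) := by rw [he]
    _ = f (b * a₁ * star b) := by rw [map_mul, map_mul, hfstar]

/-- The maps `M ↦ M̃` and `M' ↦ M' ∩ Sym(A)` are mutually inverse bijections
between proper `N`-closed quadratic modules of `A` and proper quadratic modules
of the Ore localization `Q = A N⁻¹` (modelled by an injective `*`-homomorphism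
`f : A → Q` turning `N` into units, with left and right fractions). -/
theorem quadraticModule_localization_bijection {A Q : Type*} [Ring A] [StarRing A]
    [Ring Q] [StarRing Q] (f : A →+* Q) (hfstar : ∀ a : A, f (star a) = star (f a))
    (hfinj : Function.Injective f) (N : Submonoid A)
    (hNstar : ∀ n ∈ N, star n ∈ N) (hNunit : ∀ n ∈ N, IsUnit (f n))
    (hright : ∀ q : Q, ∃ n ∈ N, ∃ a : A, q * f n = f a)
    (hleft : ∀ q : Q, ∃ n ∈ N, ∃ a : A, f n * q = f a) :
    (∀ M : Set A, IsProperQuadraticModule M → IsNClosed N M →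
      IsProperQuadraticModule
          {q : Q | star q = q ∧ ∃ n ∈ N, f n * q * star (f n) ∈ f '' M} ∧
        {a : A | star a = a ∧
          f a ∈ {q : Q | star q = q ∧ ∃ n ∈ N, f n * q * star (f n) ∈ f '' M}} = M) ∧
      ∀ M' : Set Q, IsProperQuadraticModule M' →
        IsProperQuadraticModule {a : A | star a = a ∧ f a ∈ M'} ∧
          IsNClosed N {a : A | star a = a ∧ f a ∈ M'} ∧
          {q : Q | star q = q ∧ ∃ n ∈ N,
            f n * q * star (f n) ∈ f '' {a : A | star a = a ∧ f a ∈ M'}} = M' := by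
  constructor
  · -- Part 1
    intro M hM hMc
    obtain ⟨⟨hMsym, hM1, hMadd, hMconj⟩, hMproper⟩ := hM
    obtain ⟨hMsupp, hMeq⟩ := hMc
    have hQM : IsQuadraticModule
        {q : Q | star q = q ∧ ∃ n ∈ N, f n * q * star (f n) ∈ f '' M} := by
      refine ⟨fun q hq => hq.1, ⟨star_one Q, 1, N.one_mem, ⟨1, hM1, by simp⟩⟩, ?_, ?_⟩
      · rintro q₁ ⟨hs₁, n₁, hn₁, a₁, ha₁, he₁⟩ q₂ ⟨hs₂, n₂, hn₂, a₂, ha₂, he₂⟩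
        obtain ⟨m, hm, c, hc⟩ := exists_left_common f N hNunit hleft (f n₂) hn₁
        have hcn : f (m * n₂) = f c * f n₁ := by rw [map_mul, hc]
        refine ⟨by rw [star_add, hs₁, hs₂], m * n₂, N.mul_mem hm hn₂,
          c * a₁ * star c + m * a₂ * star m,
          hMadd _ (hMconj c a₁ ha₁) _ (hMconj m a₂ ha₂), ?_⟩
        have h1 : f (m * n₂) * q₁ * star (f (m * n₂)) = f (c * a₁ * star c) := by
          rw [hcn]
          exact conj_push f hfstar he₁.symm
        have h2 : f (m * n₂) * q₂ * star (f (m * n₂)) = f (m * a₂ * star m) := by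
          rw [map_mul]
          exact conj_push f hfstar he₂.symm
        rw [map_add, ← h1, ← h2, mul_add, add_mul]
      · rintro r q ⟨hs, n₁, hn₁, a₁, ha₁, he₁⟩
        obtain ⟨n, hn, b, hb⟩ := exists_left_common f N hNunit hleft r hn₁
        refine ⟨by simp only [star_mul, star_star, hs, mul_assoc], n, hn,
          b * a₁ * star b, hMconj b a₁ ha₁, ?_⟩
        calc f (b * a₁ * star b)
            = (f b * f n₁) * q * star (f b * f n₁) := (conj_push f hfstar he₁.symm).symm
          _ = (f n * r) * q * star (f n * r) := by rw [← hb]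
          _ = f n * (r * q * star r) * star (f n) := by rw [star_mul]; noncomm_ring
    have hproper : (-1 : Q) ∉
        {q : Q | star q = q ∧ ∃ n ∈ N, f n * q * star (f n) ∈ f '' M} := by
      rintro ⟨-, n, hn, a, haM, he⟩
      have hfa : f a = f (-(n * star n)) := by
        rw [map_neg, map_mul, hfstar, he]
        noncomm_ring
      have ha : a = -(n * star n) := hfinj hfa
      have hmem : n * star n ∈ M := by
        have h := hMconj n 1 hM1
        rwa [mul_one] at h
      exact hMsupp (n * star n) (N.mul_mem hn (hNstar n hn))
        ⟨hmem, Set.mem_neg.mpr (ha ▸ haM)⟩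
    refine ⟨⟨hQM, hproper⟩, ?_⟩
    ext a
    constructor
    · rintro ⟨hsa, -, n, hn, b, hbM, he⟩
      have hb : b = n * a * star n := hfinj (by rw [map_mul, map_mul, hfstar]; exact he)
      rw [hMeq]
      exact ⟨hsa, n, hn, hb ▸ hbM⟩
    · intro haM
      refine ⟨hMsym a haM, ⟨by rw [← hfstar, hMsym a haM], 1, N.one_mem,
        ⟨a, haM, by simp⟩⟩⟩
  · -- Part 2
    intro M' hM'
    obtain ⟨hQM', hproper'⟩ := hM'
    obtain ⟨hsym', h1', hadd', hconj'⟩ := hQM'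
    have hQM' : IsQuadraticModule M' := ⟨hsym', h1', hadd', hconj'⟩
    have hPqm : IsQuadraticModule {a : A | star a = a ∧ f a ∈ M'} := by
      refine ⟨fun a ha => ha.1, ⟨star_one A, by rw [map_one]; exact h1'⟩, ?_, ?_⟩
      · rintro a ⟨hsa, hfa⟩ b ⟨hsb, hfb⟩
        exact ⟨by rw [star_add, hsa, hsb], by rw [map_add]; exact hadd' _ hfa _ hfb⟩
      · rintro r a ⟨hsa, hfa⟩
        refine ⟨by simp only [star_mul, star_star, hsa, mul_assoc], ?_⟩
        rw [map_mul, map_mul, hfstar]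
        exact hconj' (f r) _ hfa
    have hPproper : (-1 : A) ∉ {a : A | star a = a ∧ f a ∈ M'} := by
      rintro ⟨-, hfa⟩
      rw [map_neg, map_one] at hfa
      exact hproper' hfa
    have hPsupp : ∀ n ∈ N, n ∉ {a : A | star a = a ∧ f a ∈ M'} ∩
        (-{a : A | star a = a ∧ f a ∈ M'}) := by
      rintro n hn ⟨⟨hsn, hfn⟩, hneg⟩
      rw [Set.mem_neg] at hneg
      obtain ⟨-, hfneg⟩ := hneg
      rw [map_neg] at hfneg
      refine hproper' (neg_one_mem_of_isUnit hQM' (hNunit n hn) ?_ hfn hfneg)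
      rw [← hfstar, hsn]
    have hPclosed : {a : A | star a = a ∧ f a ∈ M'} =
        {a : A | star a = a ∧ ∃ n ∈ N,
          n * a * star n ∈ {a : A | star a = a ∧ f a ∈ M'}} := by
      ext a
      constructor
      · rintro ⟨hsa, hfa⟩
        refine ⟨hsa, 1, N.one_mem, ?_⟩
        simp only [one_mul, star_one, mul_one]
        exact ⟨hsa, hfa⟩
      · rintro ⟨hsa, n, hn, -, hfmem⟩
        refine ⟨hsa, ?_⟩
        have h : f n * f a * star (f n) ∈ M' := by
          rw [← hfstar, ← map_mul, ← map_mul]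
          exact hfmem
        exact mem_of_conj_isUnit hQM' (hNunit n hn) h
    refine ⟨⟨hPqm, hPproper⟩, ⟨hPsupp, hPclosed⟩, ?_⟩
    ext q
    constructor
    · rintro ⟨hsq, n, hn, b, hbP, he⟩
      have h : f n * q * star (f n) ∈ M' := he ▸ hbP.2
      exact mem_of_conj_isUnit hQM' (hNunit n hn) h
    · intro hq
      have hsq : star q = q := hsym' q hq
      obtain ⟨n, hn, a, ha⟩ := hleft q
      have he : f (a * star n) = f n * q * star (f n) := by
        rw [map_mul, hfstar, ← ha]
      refine ⟨hsq, n, hn, a * star n, ⟨?_, ?_⟩, he⟩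
      · apply hfinj
        rw [hfstar, he, star_mul, star_mul, star_star, hsq, mul_assoc]
      · rw [he]
        exact hconj' (f n) q hq
end

section
/- Let R be a *-ring with at least one proper quadratic module, M₀ a proper quadratic module in R, and x a symmetric element of R. Then the following are equivalent: (1) for every maximal proper quadratic module M containing M₀, x ∉ −M; (2) −1 belongs to the smallest quadratic module containing M₀ and −x, i.e., there exist m ∈ M₀ and finitely many r₁, …, r_k ∈ R with −1 = m − Σᵢ rᵢ·x·rᵢ*. -/
lemma QM.zero_mem {R : Type*} [Ring R] [StarRing R] {M : Set R}
    (hM : IsQuadraticModule M) : (0 : R) ∈ M := by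
  have := hM.2.2.2 0 1 hM.2.1
  simpa using this

lemma QM.sum_mem {R : Type*} [Ring R] [StarRing R] {M : Set R}
    (hM : IsQuadraticModule M) {k : ℕ} (f : Fin k → R) (hf : ∀ i, f i ∈ M) :
    (∑ i, f i) ∈ M := by
  induction k with
  | zero => simpa using QM.zero_mem hM
  | succ n ih =>
    rw [Fin.sum_univ_succ]
    exact hM.2.2.1 _ (hf 0) _ (ih _ fun i => hf _)

/-- Abstract Nirgendsnegativsemidefinitheitsstellensatz: in a semireal `*`-ring,
`x ∉ −M` for every maximal proper quadratic module `M ⊇ M₀` iff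
`−1 ∈ M₀ − N[x]`. -/
theorem nichtnegativsemidefinitheitsstellensatz {R : Type*} [Ring R] [StarRing R]
    (hsemireal : ∃ M : Set R, IsProperQuadraticModule M)
    {M₀ : Set R} (hM₀ : IsProperQuadraticModule M₀)
    {x : R} (hx : star x = x) :
    (∀ M : Set R, IsMaximalProperQuadraticModule M → M₀ ⊆ M → -x ∉ M) ↔
      ∃ m ∈ M₀, ∃ (k : ℕ) (r : Fin k → R),
        (-1 : R) = m - ∑ i, r i * x * star (r i) := by
  constructor
  · intro h
    by_contra hrep
    push_neg at hrep
    set N : Set R := {y | ∃ m ∈ M₀, ∃ (k : ℕ) (r : Fin k → R),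
        y = m + ∑ i, r i * (-x) * star (r i)} with hNdef
    have key : ∀ y ∈ N, ∃ m ∈ M₀, ∃ (k : ℕ) (r : Fin k → R),
        y = m - ∑ i, r i * x * star (r i) := by
      rintro y ⟨m, hm, k, r, rfl⟩
      refine ⟨m, hm, k, r, ?_⟩
      rw [sub_eq_add_neg, ← Finset.sum_neg_distrib]
      congr 1
      refine Finset.sum_congr rfl fun i _ => ?_
      simp [mul_neg, neg_mul]
    have hNqm : IsQuadraticModule N := by
      refine ⟨?_, ⟨1, hM₀.1.2.1, 0, ![], by simp⟩, ?_, ?_⟩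
      · rintro a ⟨m, hm, k, r, rfl⟩
        rw [star_add, hM₀.1.1 m hm, star_sum]
        congr 1
        refine Finset.sum_congr rfl fun i _ => ?_
        simp [star_mul, hx, mul_assoc]
      · rintro a ⟨m, hm, k, r, rfl⟩ b ⟨m', hm', k', r', rfl⟩
        refine ⟨m + m', hM₀.1.2.2.1 _ hm _ hm', k + k', Fin.append r r', ?_⟩
        rw [Fin.sum_univ_add]
        simp only [Fin.append_left, Fin.append_right]
        abel
      · rintro s a ⟨m, hm, k, r, rfl⟩
        refine ⟨s * m * star s, hM₀.1.2.2.2 s m hm, k, fun i => s * r i, ?_⟩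
        rw [mul_add, add_mul, Finset.mul_sum, Finset.sum_mul]
        congr 1
        refine Finset.sum_congr rfl fun i _ => ?_
        rw [star_mul]
        simp [mul_assoc, mul_neg, neg_mul]
    have hNproper : (-1 : R) ∉ N := by
      intro hmem
      obtain ⟨m, hm, k, r, heq⟩ := key _ hmem
      exact hrep m hm k r heq
    have hM₀N : M₀ ⊆ N := fun m hm => ⟨m, hm, 0, ![], by simp⟩
    have hxN : -x ∈ N := by
      refine ⟨0, QM.zero_mem hM₀.1, 1, ![1], by simp⟩
    have hchainbound : ∀ c ⊆ {M' : Set R | IsProperQuadraticModule M' ∧ N ⊆ M'},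
        IsChain (· ⊆ ·) c → c.Nonempty →
        ∃ ub ∈ {M' : Set R | IsProperQuadraticModule M' ∧ N ⊆ M'}, ∀ s ∈ c, s ⊆ ub := by
      intro c hcS hchain hcne
      obtain ⟨A, hA⟩ := hcne
      refine ⟨⋃₀ c, ⟨⟨⟨?_, ?_, ?_, ?_⟩, ?_⟩, ?_⟩, fun s hs => Set.subset_sUnion_of_mem hs⟩
      · rintro a ⟨B, hB, haB⟩
        exact (hcS hB).1.1.1 a haB
      · exact ⟨A, hA, (hcS hA).1.1.2.1⟩
      · rintro a ⟨B, hB, haB⟩ b ⟨C, hC, hbC⟩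
        rcases hchain.total hB hC with hBC | hCB
        · exact ⟨C, hC, (hcS hC).1.1.2.2.1 a (hBC haB) b hbC⟩
        · exact ⟨B, hB, (hcS hB).1.1.2.2.1 a haB b (hCB hbC)⟩
      · rintro s a ⟨B, hB, haB⟩
        exact ⟨B, hB, (hcS hB).1.1.2.2.2 s a haB⟩
      · rintro ⟨B, hB, hB1⟩
        exact (hcS hB).1.2 hB1
      · exact (hcS hA).2.trans (Set.subset_sUnion_of_mem hA)
    obtain ⟨M, hNM, hMmax⟩ := zorn_subset_nonempty
      {M' : Set R | IsProperQuadraticModule M' ∧ N ⊆ M'}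
      hchainbound N ⟨⟨hNqm, hNproper⟩, subset_rfl⟩
    have hMproper : IsProperQuadraticModule M := hMmax.1.1
    have : IsMaximalProperQuadraticModule M := by
      refine ⟨hMproper, fun M' hM' hMM' => ?_⟩
      have : M' ∈ {M' : Set R | IsProperQuadraticModule M' ∧ N ⊆ M'} :=
        ⟨hM', hNM.trans hMM'⟩
      exact le_antisymm (hMmax.2 this hMM') hMM'
    exact h M this (hM₀N.trans hNM) (hNM hxN)
  · rintro ⟨m, hm, k, r, heq⟩ M hMmax hM₀M hxM
    apply hMmax.1.2
    have hsum : (∑ i, r i * (-x) * star (r i)) ∈ M :=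
      QM.sum_mem hMmax.1.1 _ fun i => hMmax.1.1.2.2.2 (r i) _ hxM
    have : m + ∑ i, r i * (-x) * star (r i) ∈ M :=
      hMmax.1.1.2.2.1 m (hM₀M hm) _ hsum
    have heq2 : (-1 : R) = m + ∑ i, r i * (-x) * star (r i) := by
      rw [heq, sub_eq_add_neg, ← Finset.sum_neg_distrib]
      congr 1
      refine Finset.sum_congr rfl fun i _ => ?_
      simp [mul_neg, neg_mul]
    rwa [heq2]
end

section
/- Let c be a symmetric element of the d-th Weyl algebra W(d) and suppose there exist r₁, …, r_k, s₀, …, s_l ∈ W(d) with Σᵢ rᵢ*·c·rᵢ = Σⱼ sⱼ*·sⱼ such that the Schrödinger representation π₀(s₀) is invertible. Then π₀(c) is not negative semidefinite. -/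
open MulOpposite

/-! The `d`-th Weyl algebra `W(d)`: the unital complex algebra with generators
`a₁, …, a_d, a₋₁, …, a₋_d` (the generator `(k, false)` is `a_{k+1}` and
`(k, true)` is `a_{-(k+1)}`), relations `aₖ a₋ₖ − a₋ₖ aₖ = 1` and
`aₖ aₗ = aₗ aₖ` for `k ≠ -l`, and the involution determined by `aₖ* = a₋ₖ`. -/

abbrev WeylGen (d : ℕ) := Fin d × Bool

/-- The defining relations of the Weyl algebra. -/
inductive weylRel (d : ℕ) :
    FreeAlgebra ℂ (WeylGen d) → FreeAlgebra ℂ (WeylGen d) → Prop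
  | ccr (k : Fin d) :
      weylRel d (FreeAlgebra.ι ℂ (k, false) * FreeAlgebra.ι ℂ (k, true))
        (FreeAlgebra.ι ℂ (k, true) * FreeAlgebra.ι ℂ (k, false) + 1)
  | commute (x y : WeylGen d) (h : x.1 ≠ y.1 ∨ x.2 = y.2) :
      weylRel d (FreeAlgebra.ι ℂ x * FreeAlgebra.ι ℂ y)
        (FreeAlgebra.ι ℂ y * FreeAlgebra.ι ℂ x)

/-- The `d`-th Weyl algebra. -/
abbrev WeylAlgebra (d : ℕ) := RingQuot (weylRel d)

namespace WeylAlgebra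

variable (d : ℕ)

/-- The conjugated `ℂ`-algebra structure on `(WeylAlgebra d)ᵐᵒᵖ`. -/
noncomputable def conjAlg : Algebra ℂ (WeylAlgebra d)ᵐᵒᵖ :=
  ((algebraMap ℂ (WeylAlgebra d)ᵐᵒᵖ).comp (starRingEnd ℂ)).toAlgebra'
    (by
      intro c x
      simp only [RingHom.coe_comp, Function.comp_apply]
      exact (Algebra.commutes _ _))

/-- The involution on the Weyl algebra, as a ring homomorphism to the
opposite ring; it sends `aₖ` to `a₋ₖ` and is conjugate-linear on scalars. -/
noncomputable def starAux : WeylAlgebra d →+* (WeylAlgebra d)ᵐᵒᵖ := by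
  letI := conjAlg d
  refine RingQuot.lift
    ⟨((FreeAlgebra.lift ℂ
        (fun x : WeylGen d =>
          op (RingQuot.mkAlgHom ℂ (weylRel d)
            (FreeAlgebra.ι ℂ (x.1, !x.2))))) :
        FreeAlgebra ℂ (WeylGen d) →ₐ[ℂ] (WeylAlgebra d)ᵐᵒᵖ).toRingHom, ?_⟩
  have hx : ∀ x : WeylGen d,
      ((FreeAlgebra.lift ℂ
        (fun x : WeylGen d =>
          op (RingQuot.mkAlgHom ℂ (weylRel d)
            (FreeAlgebra.ι ℂ (x.1, !x.2))))) :
        FreeAlgebra ℂ (WeylGen d) →ₐ[ℂ] (WeylAlgebra d)ᵐᵒᵖ).toRingHom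
          (FreeAlgebra.ι ℂ x)
        = op (RingQuot.mkAlgHom ℂ (weylRel d) (FreeAlgebra.ι ℂ (x.1, !x.2))) :=
    fun x => FreeAlgebra.lift_ι_apply _ _
  intro a b h
  induction h with
  | ccr k =>
      simp only [map_mul, map_add, map_one, hx, Bool.not_false, Bool.not_true]
      rw [← op_mul, ← op_mul, ← op_one, ← op_add]
      rw [← map_mul, ← map_mul, ← map_one (RingQuot.mkAlgHom ℂ (weylRel d)),
        ← map_add]
      exact congrArg op (RingQuot.mkAlgHom_rel ℂ (weylRel.ccr k))
  | commute x y hxy =>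
      simp only [map_mul, hx]
      rw [← op_mul, ← op_mul, ← map_mul, ← map_mul]
      exact congrArg op (RingQuot.mkAlgHom_rel ℂ
        (weylRel.commute (y.1, !y.2) (x.1, !x.2)
          (by
            rcases hxy with h | h
            · exact Or.inl (by simpa using fun e => h e.symm)
            · exact Or.inr (by simp [h]))))

theorem starAux_mk (a : FreeAlgebra ℂ (WeylGen d)) :
    starAux d (RingQuot.mkAlgHom ℂ (weylRel d) a) =
      (by letI := conjAlg d; exact
        ((FreeAlgebra.lift ℂ
          (fun x : WeylGen d =>
            op (RingQuot.mkAlgHom ℂ (weylRel d)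
              (FreeAlgebra.ι ℂ (x.1, !x.2))))) :
          FreeAlgebra ℂ (WeylGen d) →ₐ[ℂ] (WeylAlgebra d)ᵐᵒᵖ) a) := by
  have h1 : (RingQuot.mkAlgHom ℂ (weylRel d) a : WeylAlgebra d) =
      RingQuot.mkRingHom (weylRel d) a := by
    rw [← RingQuot.mkAlgHom_coe ℂ]; rfl
  rw [h1, starAux, RingQuot.lift_mkRingHom_apply]
  rfl

theorem starAux_ι (x : WeylGen d) :
    starAux d (RingQuot.mkAlgHom ℂ (weylRel d) (FreeAlgebra.ι ℂ x)) =
      op (RingQuot.mkAlgHom ℂ (weylRel d) (FreeAlgebra.ι ℂ (x.1, !x.2))) := by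
  letI := conjAlg d
  rw [starAux_mk]
  exact FreeAlgebra.lift_ι_apply _ _

theorem starAux_algebraMap (c : ℂ) :
    starAux d (algebraMap ℂ (WeylAlgebra d) c) =
      op (algebraMap ℂ (WeylAlgebra d) (starRingEnd ℂ c)) := by
  letI := conjAlg d
  have h1 : (algebraMap ℂ (WeylAlgebra d) c) =
      RingQuot.mkAlgHom ℂ (weylRel d) (algebraMap ℂ _ c) :=
    (AlgHom.commutes _ c).symm
  rw [h1, starAux_mk]
  exact (AlgHom.commutes _ c).trans rfl

/-- The natural involution of the Weyl algebra: `star aₖ = a₋ₖ`. -/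
noncomputable instance instStarRing : StarRing (WeylAlgebra d) where
  star w := unop (starAux d w)
  star_involutive := by
    intro w
    obtain ⟨a, rfl⟩ := RingQuot.mkAlgHom_surjective ℂ (weylRel d) w
    show unop (starAux d (unop (starAux d _))) = _
    induction a using FreeAlgebra.induction with
    | grade0 c =>
        rw [AlgHom.commutes, starAux_algebraMap, unop_op, starAux_algebraMap,
          unop_op, Complex.conj_conj]
    | grade1 x =>
        rw [starAux_ι, unop_op, starAux_ι, unop_op]
        simp
    | mul a b ha hb =>
        rw [map_mul, map_mul, unop_mul, map_mul, unop_mul, ha, hb]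
    | add a b ha hb =>
        rw [map_add, map_add, unop_add, map_add, unop_add, ha, hb]
  star_mul := by intro x y; simp [map_mul]
  star_add := by intro x y; simp [map_add]

end WeylAlgebra

/-! Pair both sides of `Σᵢ rᵢ* c rᵢ = Σⱼ sⱼ* sⱼ` with a vector `φ ≠ 0`. On the left each term is
`⟪π₀ c (π₀ rᵢ φ), π₀ rᵢ φ⟫`, whose real part is `≤ 0` if `π₀ c` is negative semidefinite; on the
right each term is `‖π₀ sⱼ φ‖²`, and the one with `j = 0` is positive because `π₀ s₀` is injective. -/

open scoped InnerProductSpace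

section StarRepresentation

variable {𝕜 A V : Type*} [RCLike 𝕜] [Semiring A] [Algebra 𝕜 A]
  [NormedAddCommGroup V] [InnerProductSpace 𝕜 V] {π : A →ₐ[𝕜] Module.End 𝕜 V}

theorem re_inner_map_sum_apply {ι : Type*} (t : Finset ι) (x : ι → A) (φ : V) :
    RCLike.re ⟪π (∑ i ∈ t, x i) φ, φ⟫_𝕜 = ∑ i ∈ t, RCLike.re ⟪π (x i) φ, φ⟫_𝕜 := by
  rw [map_sum, LinearMap.sum_apply, sum_inner, map_sum]

variable [StarRing A] (hπ : ∀ (w : A) (φ ψ : V), ⟪π w φ, ψ⟫_𝕜 = ⟪φ, π (star w) ψ⟫_𝕜)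
include hπ

theorem inner_map_star_mul_mul_self_apply (a w : A) (φ : V) :
    ⟪π (star w * a * w) φ, φ⟫_𝕜 = ⟪π a (π w φ), π w φ⟫_𝕜 := by
  rw [map_mul, map_mul, Module.End.mul_apply, Module.End.mul_apply, hπ (star w), star_star]

theorem inner_map_star_mul_self_apply (w : A) (φ : V) :
    ⟪π (star w * w) φ, φ⟫_𝕜 = (‖π w φ‖ : 𝕜) ^ 2 := by
  simpa using inner_map_star_mul_mul_self_apply hπ 1 w φ

theorem re_inner_map_sum_star_mul_mul_self_nonpos {ι : Type*} (t : Finset ι) {a : A}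
    (ha : ∀ ψ : V, RCLike.re ⟪π a ψ, ψ⟫_𝕜 ≤ 0) (r : ι → A) (φ : V) :
    RCLike.re ⟪π (∑ i ∈ t, star (r i) * a * r i) φ, φ⟫_𝕜 ≤ 0 := by
  rw [re_inner_map_sum_apply]
  exact Finset.sum_nonpos fun i _ => inner_map_star_mul_mul_self_apply hπ a (r i) φ ▸ ha _

theorem re_inner_map_sum_star_mul_self_pos {ι : Type*} {t : Finset ι} {s : ι → A} {j : ι}
    (hj : j ∈ t) {φ : V} (hφ : π (s j) φ ≠ 0) :
    0 < RCLike.re ⟪π (∑ i ∈ t, star (s i) * s i) φ, φ⟫_𝕜 := by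
  simp only [re_inner_map_sum_apply, inner_map_star_mul_self_apply hπ, ← RCLike.ofReal_pow,
    RCLike.ofReal_re]
  calc 0 < ‖π (s j) φ‖ ^ 2 := by positivity
    _ ≤ ∑ i ∈ t, ‖π (s i) φ‖ ^ 2 :=
      Finset.single_le_sum (f := fun i => ‖π (s i) φ‖ ^ 2) (fun _ _ => by positivity) hj

end StarRepresentation

theorem weylAlgebra_not_negative_semidefinite_general {d : ℕ}
    {V : Type*} [NormedAddCommGroup V] [InnerProductSpace ℂ V] [Nontrivial V]
    (π₀ : WeylAlgebra d →ₐ[ℂ] Module.End ℂ V)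
    (hπ₀ : ∀ (w : WeylAlgebra d) (φ ψ : V),
      (inner ℂ (π₀ w φ) ψ : ℂ) = inner ℂ φ (π₀ (star w) ψ))
    (c : WeylAlgebra d)
    {k l : ℕ} (r : Fin k → WeylAlgebra d) (s : Fin (l + 1) → WeylAlgebra d)
    (hid : ∑ i, star (r i) * c * r i = ∑ j, star (s j) * s j)
    (hs₀ : IsUnit (π₀ (s 0))) :
    ¬ ∀ φ : V, (inner ℂ (π₀ c φ) φ : ℂ).re ≤ 0 := by
  intro hneg
  obtain ⟨φ, hφ⟩ := exists_ne (0 : V)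
  have hs₀φ : π₀ (s 0) φ ≠ 0 :=
    (map_ne_zero_iff _ ((Module.End.isUnit_iff _).mp hs₀).injective).mpr hφ
  have hpos := re_inner_map_sum_star_mul_self_pos hπ₀ (Finset.mem_univ 0) hs₀φ
  have hnonpos := re_inner_map_sum_star_mul_mul_self_nonpos hπ₀ Finset.univ hneg r φ
  rw [hid] at hnonpos
  exact hpos.not_ge hnonpos

/-- If `c` is a symmetric element of the Weyl algebra `W(d)` and
`Σᵢ rᵢ* c rᵢ = Σⱼ sⱼ* sⱼ` where the Schrödinger representation (modelled as a
`*`-representation `π₀` of `W(d)` by linear operators on a dense domain `V` of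
`L²(ℝ^d)`, a nontrivial complex inner product space) makes `π₀ s₀` invertible,
then `π₀ c` is not negative semidefinite. -/
theorem weylAlgebra_not_negative_semidefinite {d : ℕ}
    {V : Type*} [NormedAddCommGroup V] [InnerProductSpace ℂ V] [Nontrivial V]
    (π₀ : WeylAlgebra d →ₐ[ℂ] Module.End ℂ V)
    (hπ₀ : ∀ (w : WeylAlgebra d) (φ ψ : V),
      (inner ℂ (π₀ w φ) ψ : ℂ) = inner ℂ φ (π₀ (star w) ψ))
    (c : WeylAlgebra d) (hc : star c = c)
    {k l : ℕ} (r : Fin k → WeylAlgebra d) (s : Fin (l + 1) → WeylAlgebra d)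
    (hid : ∑ i, star (r i) * c * r i = ∑ j, star (s j) * s j)
    (hs₀ : IsUnit (π₀ (s 0))) :
    ¬ ∀ φ : V, (inner ℂ (π₀ c φ) φ : ℂ).re ≤ 0 :=
  weylAlgebra_not_negative_semidefinite_general π₀ hπ₀ c r s hid hs₀
end
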